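/- Let F : C → C' be a triangulated functor between pretriangulated categories. Let i : K → C and i' : K' → C' be inclusions of full triangulated subcategories admitting right adjoints R : C → K and R' : C' → K', and suppose F maps K into K', with F_K : K → K' the restriction (so F ∘ i ≅ i' ∘ F_K). Let L : C → D and L' : C' → D' be triangulated functors admitting fully faithful right adjoints j : D → C and j' : D' → C', let F̄ : D → D' be a triangulated functor equipped with a natural isomorphism L' ∘ F ≅ F̄ ∘ L, and assume K is the kernel of L and K' is the kernel of L' (objects sent to zero objects). If the upper square is right adjointable, i.e., the push–pull transformation F_K ∘ R → R' ∘ F is an isomorphism, then the lower square is right adjointable, i.e., the push–pull transformation F ∘ j → j' ∘ F̄ is an isomorphism. -/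

import Mathlib

/-!
The push–pull map `θ : F (j Y) ⟶ j' (F̄ Y)` becomes invertible after applying `L'`, so its cone
lies in the kernel `K'` of `L'`. Both ends of `θ` are right orthogonal to `K'`: the target because
`j'` is right adjoint to `L'`, the source because `R' (F (j Y)) ≅ F_K (R (j Y))` and `R (j Y) = 0`.
The connecting map of the cone therefore vanishes, so the identity of the cone factors through
`j' (F̄ Y)` and is zero.
-/

open CategoryTheory CategoryTheory.Limits CategoryTheory.Pretriangulated

namespace CategoryTheory

namespace Adjunction

variable {C D : Type*} [Category C] [Category D] {G : C ⥤ D} {H : D ⥤ C}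

lemma subsingleton_hom_of_isZero_left_obj (adj : G ⊣ H) {X : C} (hX : IsZero (G.obj X))
    (Y : D) : Subsingleton (X ⟶ H.obj Y) :=
  ⟨fun _ _ => (adj.homEquiv X Y).symm.injective (hX.eq_of_src _ _)⟩

lemma subsingleton_hom_of_isZero_right_obj (adj : G ⊣ H) {Y : D} (hY : IsZero (H.obj Y))
    {X : D} (hX : G.essImage X) : Subsingleton (X ⟶ Y) := by
  obtain ⟨A, ⟨eA⟩⟩ := hX
  exact ⟨fun _ _ => ((eA.homCongr (Iso.refl Y)).symm.trans (adj.homEquiv A Y)).injective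
    (hY.eq_of_tgt _ _)⟩

lemma isZero_right_obj_of_subsingleton [HasZeroMorphisms C] (adj : G ⊣ H) {Y : D}
    (h : ∀ A : C, Subsingleton (G.obj A ⟶ Y)) : IsZero (H.obj Y) := by
  rw [IsZero.iff_id_eq_zero]
  exact (adj.homEquiv _ Y).symm.injective (Subsingleton.elim _ _)

lemma isIso_map_homEquiv [H.Full] [H.Faithful] (adj : G ⊣ H) {X : C} {Y : D}
    (φ : G.obj X ⟶ Y) [IsIso φ] : IsIso (G.map (adj.homEquiv X Y φ)) := by
  have hφ : G.map (adj.homEquiv X Y φ) ≫ adj.counit.app Y = φ :=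
    (adj.homEquiv_counit X Y _).symm.trans ((adj.homEquiv X Y).symm_apply_apply φ)
  have : IsIso (G.map (adj.homEquiv X Y φ) ≫ adj.counit.app Y) := by rw [hφ]; infer_instance
  exact IsIso.of_isIso_comp_right _ (adj.counit.app Y)

end Adjunction

section Triangulated

variable {C D : Type*} [Category C] [HasShift C ℤ] [Category D] [Preadditive D] [HasShift D ℤ]
  [∀ n : ℤ, (shiftFunctor D n).Additive]

lemma Functor.isZero_obj_shift_of_isZero_obj (L : C ⥤ D) [L.CommShift ℤ] {Z : C}
    (hZ : IsZero (L.obj Z)) (n : ℤ) : IsZero (L.obj (Z⟦n⟧)) :=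
  ((shiftFunctor D n).map_isZero hZ).of_iso ((L.commShiftIso n).app Z)

variable [HasZeroObject C] [Preadditive C] [∀ n : ℤ, (shiftFunctor C n).Additive]
  [Pretriangulated C]

lemma Pretriangulated.isZero₃_of_subsingleton {T : Triangle C} (hT : T ∈ distTriang C)
    (h₂ : Subsingleton (T.obj₃ ⟶ T.obj₂)) (h₁ : Subsingleton (T.obj₃ ⟶ T.obj₁⟦(1 : ℤ)⟧)) :
    IsZero T.obj₃ := by
  obtain ⟨v, hv⟩ := Triangle.coyoneda_exact₃ T hT (𝟙 _) (h₁.elim _ _)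
  rw [IsZero.iff_id_eq_zero, hv, h₂.elim v 0, zero_comp]

variable [HasZeroObject D] [Pretriangulated D]

lemma Functor.isIso_of_isIso_map_of_orthogonal_kernel (L : C ⥤ D) [L.CommShift ℤ]
    [L.IsTriangulated] {X Y : C} (θ : X ⟶ Y) [IsIso (L.map θ)]
    (hX : ∀ Z, IsZero (L.obj Z) → Subsingleton (Z ⟶ X))
    (hY : ∀ Z, IsZero (L.obj Z) → Subsingleton (Z ⟶ Y)) : IsIso θ := by
  obtain ⟨Z, g, h, hT⟩ := distinguished_cocone_triangle θ
  have hZ : IsZero (L.obj Z) :=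
    Triangle.isZero₃_of_isIso₁ _ (L.map_distinguished _ hT) (inferInstanceAs (IsIso (L.map θ)))
  have hZX : Subsingleton (Z ⟶ X⟦(1 : ℤ)⟧) :=
    @Equiv.subsingleton _ _ ((shiftEquiv C (1 : ℤ)).symm.toAdjunction.homEquiv Z X).symm
      (hX _ (L.isZero_obj_shift_of_isZero_obj hZ (-1)))
  exact (Triangle.isZero₃_iff_isIso₁ _ hT).1 (isZero₃_of_subsingleton hT (hY Z hZ) hZX)

end Triangulated

end CategoryTheory

theorem statement11 {K C K' C' D D' : Type*}
    [Category K] [Category C] [Category K'] [Category C'] [Category D] [Category D']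
    [HasZeroObject K] [HasZeroObject C] [HasZeroObject K'] [HasZeroObject C']
    [HasZeroObject D] [HasZeroObject D']
    [Preadditive K] [Preadditive C] [Preadditive K'] [Preadditive C']
    [Preadditive D] [Preadditive D']
    [HasShift K ℤ] [HasShift C ℤ] [HasShift K' ℤ] [HasShift C' ℤ]
    [HasShift D ℤ] [HasShift D' ℤ]
    [∀ n : ℤ, (shiftFunctor K n).Additive] [∀ n : ℤ, (shiftFunctor C n).Additive]
    [∀ n : ℤ, (shiftFunctor K' n).Additive] [∀ n : ℤ, (shiftFunctor C' n).Additive]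
    [∀ n : ℤ, (shiftFunctor D n).Additive] [∀ n : ℤ, (shiftFunctor D' n).Additive]
    [Pretriangulated K] [Pretriangulated C] [Pretriangulated K'] [Pretriangulated C']
    [Pretriangulated D] [Pretriangulated D']
    -- `F` is a triangulated functor
    (F : C ⥤ C') [F.CommShift ℤ] [F.IsTriangulated]
    -- `i` and `i'` are inclusions of full triangulated subcategories, with right adjoints
    (i : K ⥤ C) [i.Full] [i.Faithful] [i.CommShift ℤ] [i.IsTriangulated]
    (i' : K' ⥤ C') [i'.Full] [i'.Faithful] [i'.CommShift ℤ] [i'.IsTriangulated]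
    (R : C ⥤ K) (adjiR : i ⊣ R) (R' : C' ⥤ K') (adjiR' : i' ⊣ R')
    -- `F` maps `K` into `K'`, with restriction `F_K`
    (F_K : K ⥤ K') (e : i ⋙ F ≅ F_K ⋙ i')
    -- `L` and `L'` are triangulated functors with fully faithful right adjoints `j`, `j'`
    (L : C ⥤ D) [L.CommShift ℤ] [L.IsTriangulated]
    (L' : C' ⥤ D') [L'.CommShift ℤ] [L'.IsTriangulated]
    (j : D ⥤ C) [j.Full] [j.Faithful] (adjLj : L ⊣ j)
    (j' : D' ⥤ C') [j'.Full] [j'.Faithful] (adjLj' : L' ⊣ j')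
    -- `F̄` is a triangulated functor with a natural isomorphism `L' ∘ F ≅ F̄ ∘ L`
    (Fbar : D ⥤ D') [Fbar.CommShift ℤ] [Fbar.IsTriangulated] (com : F ⋙ L' ≅ L ⋙ Fbar)
    -- `K` is the kernel of `L` and `K'` is the kernel of `L'`
    (hker : ∀ X : C, i.essImage X ↔ IsZero (L.obj X))
    (hker' : ∀ X' : C', i'.essImage X' ↔ IsZero (L'.obj X'))
    -- the upper square is right adjointable
    (hupper : ∀ X : C, IsIso ((adjiR'.homEquiv (F_K.obj (R.obj X)) (F.obj X))
      (e.inv.app (R.obj X) ≫ F.map (adjiR.counit.app X)))) :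
    -- then the lower square is right adjointable
    ∀ Y : D, IsIso ((adjLj'.homEquiv (F.obj (j.obj Y)) (Fbar.obj Y))
      (com.hom.app (j.obj Y) ≫ Fbar.map (adjLj.counit.app Y))) := by
  intro Y
  have hRj : IsZero (R.obj (j.obj Y)) := adjiR.isZero_right_obj_of_subsingleton fun A =>
    adjLj.subsingleton_hom_of_isZero_left_obj ((hker _).1 (i.obj_mem_essImage A)) Y
  have : i.IsLeftAdjoint := adjiR.isLeftAdjoint
  have hFK : IsZero (F_K.obj (R.obj (j.obj Y))) := IsZero.of_full_of_faithful_of_isZero i' _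
    ((F.map_isZero (i.map_isZero hRj)).of_iso (e.app _).symm)
  have hR'F : IsZero (R'.obj (F.obj (j.obj Y))) := by
    have := hupper (j.obj Y)
    exact hFK.of_iso (asIso (adjiR'.homEquiv (F_K.obj (R.obj (j.obj Y))) (F.obj (j.obj Y))
      (e.inv.app (R.obj (j.obj Y)) ≫ F.map (adjiR.counit.app (j.obj Y))))).symm
  have : IsIso (L'.map (adjLj'.homEquiv (F.obj (j.obj Y)) (Fbar.obj Y)
      (com.hom.app (j.obj Y) ≫ Fbar.map (adjLj.counit.app Y)))) := adjLj'.isIso_map_homEquiv _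
  exact L'.isIso_of_isIso_map_of_orthogonal_kernel _
    (fun Z hZ => adjiR'.subsingleton_hom_of_isZero_right_obj hR'F ((hker' Z).2 hZ))
    (fun Z hZ => adjLj'.subsingleton_hom_of_isZero_left_obj hZ _)
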